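/- arXiv:1710.00224 — 4 statements merged into one kernel-verified Lean document; each statement's English description precedes it below -/
import Mathlib

section
/- Let M = (M_{ji}) be an m×n integer matrix and let χ : (ℂˣ)ⁿ → (ℂˣ)ᵐ be the monomial group homomorphism defined by χ(t)_j = ∏_{i=1}^n t_i^{M_{ji}} (integer powers). If (x_a)_{a∈ℕ} is a sequence in (ℂˣ)ⁿ such that (χ(x_a))_{a∈ℕ} converges to some y ∈ (ℂˣ)ᵐ, then there exists a sequence (x'_a)_{a∈ℕ} in (ℂˣ)ⁿ converging to some x' ∈ (ℂˣ)ⁿ such that χ(x'_a) = χ(x_a) for every a ∈ ℕ; in particular y = χ(x') lies in the image of χ. -/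
/-!
Write `χ (x a) = exp (M ℓ a)` with `ℓ a = log (x a)`, and pick logarithms `c a → log y` of
`χ (x a)` depending continuously on `χ (x a)`; then `M ℓ a = c a + 2πi k a` with `k a ∈ ℤᵐ`.
An integer matrix `K` whose kernel over `ℚ` is the column space of `M` kills `M ℓ a`, so
`K (k a) = -(2πi)⁻¹ K (c a)` is a convergent integer sequence, hence eventually equal to some
`K k₀`. Consequently `c a + 2πi k₀` lies in the column space of `M` for large `a`, and so does its
limit `log y + 2πi k₀`. A linear right inverse of `M` on its column space, continuous in finite
dimension, lifts these to a convergent sequence `ℓ' a`, and `x' a = exp (ℓ' a)` for large `a`.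
-/

open Filter Topology Matrix Complex
open scoped Real

theorem Topology.IsClosedEmbedding.exists_eventually_eq_of_tendsto {X Y α : Type*}
    [TopologicalSpace X] [DiscreteTopology X] [TopologicalSpace Y] {e : X → Y}
    (he : IsClosedEmbedding e) {l : Filter α} [l.NeBot] {g : α → X} {y : Y}
    (hg : Tendsto (e ∘ g) l (𝓝 y)) : ∃ x, ∀ᶠ a in l, g a = x := by
  obtain ⟨x, rfl⟩ : y ∈ Set.range e :=
    he.isClosed_range.mem_of_tendsto hg (Eventually.of_forall fun a => ⟨g a, rfl⟩)
  rw [← he.tendsto_nhds_iff, nhds_discrete, tendsto_pure] at hg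
  exact ⟨x, hg⟩

theorem LinearMap.exists_rightInverse_on_range {K E F : Type*} [Field K] [AddCommGroup E]
    [Module K E] [AddCommGroup F] [Module K F] (f : E →ₗ[K] F) :
    ∃ s : F →ₗ[K] E, ∀ u ∈ LinearMap.range f, f (s u) = u := by
  obtain ⟨p, hp⟩ := (LinearMap.range f).subtype.exists_leftInverse_of_injective
    (Submodule.ker_subtype _)
  obtain ⟨g, hg⟩ := f.rangeRestrict.exists_rightInverse_of_surjective f.range_rangeRestrict
  refine ⟨g ∘ₗ p, fun u hu => ?_⟩
  have hpu : p u = ⟨u, hu⟩ := LinearMap.congr_fun hp ⟨u, hu⟩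
  simpa [hpu] using congrArg Subtype.val (LinearMap.congr_fun hg ⟨u, hu⟩)

theorem LinearMap.exists_tendsto_of_tendsto_of_mem_range {𝕜 E F α : Type*}
    [NontriviallyNormedField 𝕜] [CompleteSpace 𝕜] [NormedAddCommGroup E] [NormedSpace 𝕜 E]
    [FiniteDimensional 𝕜 E] [NormedAddCommGroup F] [NormedSpace 𝕜 F] [FiniteDimensional 𝕜 F]
    (f : E →ₗ[𝕜] F) {l : Filter α} [l.NeBot] {z : α → F} {z₀ : F} (hz : Tendsto z l (𝓝 z₀))
    (hmem : ∀ᶠ a in l, z a ∈ LinearMap.range f) :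
    ∃ w : α → E, ∃ w₀ : E, Tendsto w l (𝓝 w₀) ∧ (∀ᶠ a in l, f (w a) = z a) ∧ f w₀ = z₀ := by
  obtain ⟨s, hs⟩ := f.exists_rightInverse_on_range
  have hz₀ : z₀ ∈ LinearMap.range f :=
    (Submodule.closed_of_finiteDimensional _).mem_of_tendsto hz hmem
  exact ⟨s ∘ z, s z₀, (s.continuous_of_finiteDimensional.tendsto z₀).comp hz,
    hmem.mono fun a => hs (z a), hs z₀ hz₀⟩

namespace Matrix

theorem exists_ker_mulVecLin_eq {K κ : Type*} [Field K] [Fintype κ]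
    (V : Submodule K (κ → K)) : ∃ r, ∃ P : Matrix (Fin r) κ K, LinearMap.ker P.mulVecLin = V := by
  classical
  let f := (Module.finBasis K ((κ → K) ⧸ V)).equivFun.toLinearMap ∘ₗ V.mkQ
  refine ⟨_, LinearMap.toMatrix' f, ?_⟩
  rw [← toLin'_apply', toLin'_toMatrix', LinearEquiv.ker_comp, Submodule.ker_mkQ]

theorem map_intCast_mul {l m n R : Type*} [Fintype m] [Ring R] (A : Matrix l m ℤ)
    (B : Matrix m n ℤ) :
    (A * B).map ((↑) : ℤ → R) = A.map ((↑) : ℤ → R) * B.map ((↑) : ℤ → R) :=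
  Matrix.map_mul (f := Int.castRingHom R)

theorem intCast_comp_mulVec {m n R : Type*} [Fintype n] [Ring R] (A : Matrix m n ℤ)
    (v : n → ℤ) : ((↑) ∘ (A *ᵥ v) : m → R) = A.map (↑) *ᵥ ((↑) ∘ v) :=
  funext (RingHom.map_mulVec (Int.castRingHom R) A v)

theorem exists_intMatrix_mul_eq_zero_and_ker_le_range {ι κ : Type*} [Fintype ι] [Fintype κ]
    (M : Matrix κ ι ℤ) :
    ∃ r, ∃ K : Matrix (Fin r) κ ℤ, K * M = 0 ∧
      ∀ k, K *ᵥ k = 0 → ((↑) ∘ k : κ → ℚ) ∈ LinearMap.range (M.map (↑)).mulVecLin := by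
  classical
  obtain ⟨r, P, hP⟩ := exists_ker_mulVecLin_eq (LinearMap.range (M.map ((↑) : ℤ → ℚ)).mulVecLin)
  have hPM : P * M.map ((↑) : ℤ → ℚ) = 0 := by
    apply toLin'.injective
    rw [toLin'_mul, _root_.map_zero, toLin'_apply', toLin'_apply', ← LinearMap.range_le_ker_iff, hP]
  obtain ⟨⟨d, hd⟩, hL⟩ :=
    IsLocalization.exist_integer_multiples_of_finite (nonZeroDivisors ℤ) (Function.uncurry P)
  choose L hL using hL
  set K : Matrix (Fin r) κ ℤ := of fun i j => L (i, j)
  have hKP : K.map ((↑) : ℤ → ℚ) = d • P := by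
    ext i j
    exact hL (i, j)
  refine ⟨r, K, ?_, fun k hk => ?_⟩
  · apply map_injective (f := ((↑) : ℤ → ℚ)) Int.cast_injective
    dsimp only
    rw [map_intCast_mul, hKP, smul_mul, hPM, smul_zero, Matrix.map_zero _ Int.cast_zero]
  · have hdP : d • (P *ᵥ ((↑) ∘ k)) = 0 := by
      rw [← smul_mulVec, ← hKP, ← intCast_comp_mulVec, hk]
      rfl
    rw [← hP]
    exact (smul_eq_zero.mp hdP).resolve_left (nonZeroDivisors.ne_zero hd)

theorem exists_eventually_add_smul_intCast_mem_range {ι κ α : Type*} [Fintype ι] [Fintype κ]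
    (M : Matrix κ ι ℤ) {τ : ℂ} (hτ : τ ≠ 0)
    {l : Filter α} [l.NeBot] {c : α → κ → ℂ} {c₀ : κ → ℂ} (hc : Tendsto c l (𝓝 c₀))
    {k : α → κ → ℤ}
    (hk : ∀ a, c a + τ • ((↑) ∘ k a) ∈ LinearMap.range (M.map ((↑) : ℤ → ℂ)).mulVecLin) :
    ∃ k₀ : κ → ℤ, ∀ᶠ a in l,
      c a + τ • ((↑) ∘ k₀) ∈ LinearMap.range (M.map ((↑) : ℤ → ℂ)).mulVecLin := by
  set V := LinearMap.range (M.map ((↑) : ℤ → ℂ)).mulVecLin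
  obtain ⟨r, K, hKM, hK⟩ := M.exists_intMatrix_mul_eq_zero_and_ker_le_range
  have hKV : ∀ u ∈ V, K.map (↑) *ᵥ u = 0 := by
    rintro _ ⟨v, rfl⟩
    rw [mulVecLin_apply, mulVec_mulVec, ← map_intCast_mul, hKM, Matrix.map_zero _ Int.cast_zero,
      zero_mulVec]
  have hKk : ∀ a, ((↑) ∘ (K *ᵥ k a) : Fin r → ℂ) = -τ⁻¹ • (K.map (↑) *ᵥ c a) := by
    intro a
    have h := hKV _ (hk a)
    rw [mulVec_add, mulVec_smul, ← intCast_comp_mulVec] at h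
    rw [neg_smul, ← smul_neg, ← eq_neg_of_add_eq_zero_right h, inv_smul_smul₀ hτ]
  have hlim : Tendsto (fun a => ((↑) ∘ (K *ᵥ k a) : Fin r → ℂ)) l
      (𝓝 (-τ⁻¹ • (K.map (↑) *ᵥ c₀))) := by
    simp only [hKk]
    exact (((continuous_const.matrix_mulVec continuous_id).tendsto c₀).comp hc).const_smul _
  obtain ⟨t, ht⟩ := (IsClosedEmbedding.piMap fun _ => isClosedEmbedding_intCast
    ).exists_eventually_eq_of_tendsto (g := fun a => K *ᵥ k a) hlim
  obtain ⟨N, hN⟩ := ht.exists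
  refine ⟨k N, ht.mono fun a ha => ?_⟩
  obtain ⟨v, hv⟩ := hK (k a - k N) (by rw [mulVec_sub, ha, hN, sub_self])
  have hdiff : ((↑) ∘ (k a - k N) : κ → ℂ) ∈ V := by
    refine ⟨(↑) ∘ v, funext fun j => ?_⟩
    simpa [mulVec, dotProduct] using congrArg ((↑) : ℚ → ℂ) (congrFun hv j)
  convert V.sub_mem (hk a) (V.smul_mem τ hdiff) using 1
  ext j
  simp only [Function.comp_apply, Pi.add_apply, Pi.smul_apply, Pi.sub_apply, smul_eq_mul,
    Int.cast_sub]
  ring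

end Matrix

noncomputable def Complex.expUnit (z : ℂ) : ℂˣ := Units.mk0 (exp z) (exp_ne_zero z)

@[simp]
theorem Complex.val_expUnit (z : ℂ) : (expUnit z : ℂ) = exp z := rfl

theorem Complex.val_prod_expUnit_zpow {ι κ : Type*} [Fintype ι] (M : Matrix κ ι ℤ)
    (u : ι → ℂ) (j : κ) :
    ((∏ i, expUnit (u i) ^ M j i : ℂˣ) : ℂ) = exp ((M.map (↑) *ᵥ u) j) := by
  simp [Units.coe_prod, mulVec, dotProduct, exp_sum, ← exp_int_mul]

theorem Complex.exp_add_two_pi_I_smul_intCast {ι : Type*} (z : ι → ℂ) (k : ι → ℤ) (j : ι) :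
    exp ((z + (2 * π * I) • ((↑) ∘ k : ι → ℂ)) j) = exp (z j) := by
  simpa [mul_comm] using exp_periodic.int_mul (k j) (z j)

theorem Complex.exists_tendsto_log_of_tendsto {α ι : Type*} {l : Filter α} {u : α → ι → ℂˣ}
    {y : ι → ℂˣ} (hu : Tendsto (fun a j => (u a j : ℂ)) l (𝓝 fun j => (y j : ℂ))) :
    ∃ c : α → ι → ℂ, Tendsto c l (𝓝 fun j => log (y j)) ∧ ∀ a j, exp (c a j) = u a j := by
  -- `log (u / y)` is continuous where `u / y` is close to `1`, whereas `log u` may jump.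
  refine ⟨fun a j => log (y j) + log (u a j / y j), tendsto_pi_nhds.2 fun j => ?_,
    fun a j => ?_⟩
  · have hdiv : Tendsto (fun a => (u a j : ℂ) / y j) l (𝓝 1) := by
      simpa using (tendsto_pi_nhds.1 hu j).div_const (y j : ℂ)
    simpa using tendsto_const_nhds.add ((continuousAt_clog one_mem_slitPlane).tendsto.comp hdiv)
  · rw [exp_add, exp_log (y j).ne_zero, exp_log (div_ne_zero (u a j).ne_zero (y j).ne_zero),
      mul_div_cancel₀ _ (y j).ne_zero]

/-- Multiplicative adjustment lemma: a sequence in `(ℂˣ)ⁿ` whose image under a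
monomial homomorphism converges in `(ℂˣ)ᵐ` can be replaced by a convergent sequence
with the same monomial images; in particular the limit lies in the image. -/
theorem monomial_adjust (n m : ℕ) (M : Matrix (Fin m) (Fin n) ℤ)
    (χ : (Fin n → ℂˣ) → (Fin m → ℂˣ))
    (hχ : ∀ (t : Fin n → ℂˣ) (j : Fin m), χ t j = ∏ i, (t i) ^ (M j i))
    (x : ℕ → (Fin n → ℂˣ)) (y : Fin m → ℂˣ)
    (hconv : Tendsto (fun a => fun j => ((χ (x a) j : ℂ))) atTop
      (𝓝 (fun j => (y j : ℂ)))) :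
    ∃ x' : ℕ → (Fin n → ℂˣ), ∃ xlim : Fin n → ℂˣ,
      Tendsto (fun a => fun i => ((x' a i : ℂ))) atTop (𝓝 (fun i => (xlim i : ℂ))) ∧
      (∀ a : ℕ, χ (x' a) = χ (x a)) ∧ y = χ xlim := by
  set A := (M.map ((↑) : ℤ → ℂ)).mulVecLin
  have hχA : ∀ u j, (χ (expUnit ∘ u) j : ℂ) = exp (A u j) := fun u j => by
    rw [hχ]
    exact val_prod_expUnit_zpow M u j
  have hx : ∀ a, x a = expUnit ∘ fun i => log (x a i) :=
    fun a => funext fun i => Units.ext (exp_log (x a i).ne_zero).symm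
  obtain ⟨c, hc, hc_exp⟩ := exists_tendsto_log_of_tendsto hconv
  have hk : ∀ a j, ∃ k : ℤ, A (fun i => log (x a i)) j = c a j + k * (2 * π * I) :=
    fun a j => exp_eq_exp_iff_exists_int.1 (by rw [← hχA, ← hx a, hc_exp])
  choose k hk using hk
  obtain ⟨k₀, hk₀⟩ := M.exists_eventually_add_smul_intCast_mem_range two_pi_I_ne_zero hc
    (k := k) fun a => ⟨fun i => log (x a i), funext fun j => by rw [hk]; simp [mul_comm]⟩
  obtain ⟨w, w₀, hw, hw_eq, hw₀⟩ := A.exists_tendsto_of_tendsto_of_mem_range (hc.add_const _) hk₀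
  obtain ⟨N, hN⟩ := eventually_atTop.1 hw_eq
  refine ⟨fun a => if N ≤ a then expUnit ∘ w a else x a, expUnit ∘ w₀, ?_, fun a => ?_, ?_⟩
  · refine (tendsto_pi_nhds.2 fun i => (continuous_exp.tendsto _).comp (tendsto_pi_nhds.1 hw i)
      ).congr' ((eventually_ge_atTop N).mono fun a ha => ?_)
    simp [ha]
  · dsimp only
    split_ifs with ha
    · ext j
      rw [hχA, hN a ha, exp_add_two_pi_I_smul_intCast, hc_exp]
    · rfl
  · ext j
    rw [hχA, hw₀, exp_add_two_pi_I_smul_intCast, exp_log (y j).ne_zero]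
end

section
/- Let ρ : ℤⁿ → ℤᵐ be a ℤ-linear map and ρ_ℝ : ℝⁿ → ℝᵐ its ℝ-linear extension. If ker ρ_ℝ contains a vector all of whose coordinates are strictly positive real numbers, then ker ρ contains a vector in ℤⁿ all of whose coordinates are strictly positive integers. -/
open TensorProduct

set_option synthInstance.maxHeartbeats 1000000 in
set_option maxHeartbeats 1000000 in
lemma real_ker_subset_span_rat_ker {m n : ℕ} (Aq : Matrix (Fin m) (Fin n) ℚ)
    (x : Fin n → ℝ) (hx : (Aq.map (fun a => (a : ℝ))).mulVecLin x = 0) :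
    x ∈ Submodule.span ℝ ((fun q : Fin n → ℚ => fun i => ((q i : ℝ))) ''
      (LinearMap.ker Aq.mulVecLin : Set (Fin n → ℚ))) := by
  classical
  set g := Aq.mulVecLin with hg
  set e1 := TensorProduct.piScalarRight ℚ ℝ ℝ (Fin n) with he1
  set e2 := TensorProduct.piScalarRight ℚ ℝ ℝ (Fin m) with he2
  have hcomm : ∀ t : ℝ ⊗[ℚ] (Fin n → ℚ),
      e2 (g.baseChange ℝ t) = (Aq.map (fun a => (a : ℝ))).mulVecLin (e1 t) := by
    intro t
    induction t using TensorProduct.induction_on with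
    | zero => simp
    | tmul r f =>
        rw [LinearMap.baseChange_tmul]
        funext j
        simp only [he1, he2, TensorProduct.piScalarRight_apply,
          TensorProduct.piScalarRightHom_tmul, hg, Matrix.mulVecLin_apply, Matrix.mulVec,
          dotProduct, Matrix.map_apply, Rat.smul_def]
        push_cast
        rw [Finset.sum_mul]
        exact Finset.sum_congr rfl fun i _ => by ring
    | add a b ha hb => simp only [map_add, ha, hb]
  have h0 : g.baseChange ℝ (e1.symm x) = 0 := by
    apply e2.injective
    rw [hcomm, e1.apply_symm_apply, hx]; exact (map_zero _).symm
  have hex : Function.Exact ((LinearMap.ker g).subtype.baseChange ℝ) (g.baseChange ℝ) := by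
    have h := Module.Flat.lTensor_exact (R := ℚ) ℝ g.exact_subtype_ker_map
    rwa [← LinearMap.baseChange_eq_ltensor, ← LinearMap.baseChange_eq_ltensor] at h
  obtain ⟨s, hs⟩ := (hex _).mp h0
  have key : ∀ s : ℝ ⊗[ℚ] (LinearMap.ker g),
      e1 ((LinearMap.ker g).subtype.baseChange ℝ s) ∈
        Submodule.span ℝ ((fun q : Fin n → ℚ => fun i => ((q i : ℝ))) ''
          (LinearMap.ker Aq.mulVecLin : Set (Fin n → ℚ))) := by
    intro s
    induction s using TensorProduct.induction_on with
    | zero => simp only [map_zero]; exact Submodule.zero_mem _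
    | tmul r k =>
        rw [LinearMap.baseChange_tmul]
        have hk : e1 (r ⊗ₜ[ℚ] ((LinearMap.ker g).subtype k)) =
            r • (fun i => (((k : Fin n → ℚ)) i : ℝ)) := by
          funext i
          simp [he1, Rat.smul_def, mul_comm]
        rw [hk]
        exact Submodule.smul_mem _ _ (Submodule.subset_span ⟨(k : Fin n → ℚ), k.2, rfl⟩)
    | add a b ha hb =>
        rw [map_add, map_add]
        exact Submodule.add_mem _ ha hb
  have := key s
  rw [hs, e1.apply_symm_apply] at this
  exact this



/-- Corollary 3.17 (abstract form): if the real kernel of an integer linear map contains a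
vector with all coordinates strictly positive, then its integer kernel contains a vector
with all coordinates strictly positive integers. -/
theorem exists_positive_integral_kernel_vector
    (n m : ℕ) (ρ : (Fin n → ℤ) →ₗ[ℤ] (Fin m → ℤ))
    (ρℝ : (Fin n → ℝ) →ₗ[ℝ] (Fin m → ℝ))
    (hext : ∀ x : Fin n → ℤ, ρℝ (fun i => (x i : ℝ)) = fun j => ((ρ x j : ℝ)))
    (mpos : Fin n → ℝ) (hker : ρℝ mpos = 0) (hpos : ∀ i, 0 < mpos i) :
    ∃ v : Fin n → ℤ, ρ v = 0 ∧ ∀ i, 0 < v i := by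
  classical
  rcases Nat.eq_zero_or_pos n with hn | hn
  · subst hn
    exact ⟨0, map_zero ρ, fun i => i.elim0⟩
  -- the integer matrix of ρ
  set A : Matrix (Fin m) (Fin n) ℤ := Matrix.of (fun j i => ρ (Pi.single i 1) j) with hA
  have hρℝ : ∀ x : Fin n → ℝ, ∀ j, ρℝ x j = ∑ i, x i * (A j i : ℝ) := by
    intro x j
    rw [LinearMap.pi_apply_eq_sum_univ ρℝ x]
    simp only [Finset.sum_apply, Pi.smul_apply, smul_eq_mul]
    refine Finset.sum_congr rfl fun i _ => ?_
    have hs : (fun t => ((Pi.single i 1 : Fin n → ℤ) t : ℝ)) =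
        (fun t => if i = t then (1 : ℝ) else 0) := by
      funext t
      simp [Pi.single_apply, eq_comm]
    rw [← hs, hext (Pi.single i 1)]
    rfl
  set Aq : Matrix (Fin m) (Fin n) ℚ := A.map (fun z => (z : ℚ)) with hAq
  have hAr : (Aq.map (fun a => (a : ℝ))).mulVecLin mpos = 0 := by
    funext j
    have h0 : ρℝ mpos j = 0 := by rw [hker]; rfl
    rw [hρℝ mpos j] at h0
    simp only [Matrix.mulVecLin_apply, Matrix.mulVec, dotProduct, Matrix.map_apply,
      hAq, Pi.zero_apply]
    rw [← h0]
    push_cast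
    exact Finset.sum_congr rfl fun i _ => by ring
  have hspan := real_ker_subset_span_rat_ker Aq mpos hAr
  rw [Submodule.mem_span_set'] at hspan
  obtain ⟨k, f, gg, hsum⟩ := hspan
  choose w hwK hwc using fun i : Fin k => (gg i).2
  -- coordinates of mpos as a combination of rational kernel vectors
  have hmpos : ∀ t, mpos t = ∑ i, f i * ((w i t : ℚ) : ℝ) := by
    intro t
    rw [← hsum]
    simp only [Finset.sum_apply, Pi.smul_apply, smul_eq_mul]
    refine Finset.sum_congr rfl fun i _ => ?_
    rw [← hwc i]
  -- approximate the real coefficients by rationals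
  set Mi : Fin n → ℝ := fun t => ∑ i, |((w i t : ℚ) : ℝ)| with hMi
  have hMi0 : ∀ t, 0 ≤ Mi t := fun t => Finset.sum_nonneg fun i _ => abs_nonneg _
  have hne : (Finset.univ : Finset (Fin n)).Nonempty := ⟨⟨0, hn⟩, Finset.mem_univ _⟩
  set δ : ℝ := Finset.univ.inf' hne (fun t => mpos t / (Mi t + 1)) with hδ
  have hδpos : 0 < δ := by
    rw [hδ, Finset.lt_inf'_iff]
    intro t _
    exact div_pos (hpos t) (by linarith [hMi0 t])
  have hδle : ∀ t, δ ≤ mpos t / (Mi t + 1) := fun t => Finset.inf'_le _ (Finset.mem_univ t)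
  choose r hr using fun i : Fin k => exists_rat_near (f i) hδpos
  set q : Fin n → ℚ := ∑ i, r i • w i with hq
  have hqK : q ∈ LinearMap.ker Aq.mulVecLin :=
    Submodule.sum_mem _ fun i _ => Submodule.smul_mem _ _ (hwK i)
  have hqc : ∀ t, ((q t : ℚ) : ℝ) = ∑ i, (r i : ℝ) * ((w i t : ℚ) : ℝ) := by
    intro t
    rw [hq]
    simp only [Finset.sum_apply, Pi.smul_apply, smul_eq_mul]
    push_cast
    rfl
  have hqpos : ∀ t, (0 : ℝ) < ((q t : ℚ) : ℝ) := by
    intro t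
    have hdiff : |((q t : ℚ) : ℝ) - mpos t| ≤ δ * Mi t := by
      rw [hqc t, hmpos t, ← Finset.sum_sub_distrib]
      refine (Finset.abs_sum_le_sum_abs _ _).trans ?_
      rw [hMi, Finset.mul_sum]
      refine Finset.sum_le_sum fun i _ => ?_
      rw [← sub_mul, abs_mul]
      refine mul_le_mul_of_nonneg_right ?_ (abs_nonneg _)
      rw [abs_sub_comm]
      exact (hr i).le
    have h3 : δ * (Mi t + 1) ≤ mpos t := by
      calc δ * (Mi t + 1) ≤ (mpos t / (Mi t + 1)) * (Mi t + 1) :=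
            mul_le_mul_of_nonneg_right (hδle t) (by linarith [hMi0 t])
        _ = mpos t := div_mul_cancel₀ _ (by linarith [hMi0 t])
    have h2 : δ * Mi t < mpos t := by nlinarith [hδpos]
    have h4 := abs_lt.mp (lt_of_le_of_lt hdiff h2)
    linarith [h4.1]
  have hqpos' : ∀ t, 0 < q t := fun t => by exact_mod_cast hqpos t
  -- clear denominators
  set D : ℕ := ∏ t, (q t).den with hD
  have hDpos : 0 < D := Finset.prod_pos fun t _ => (q t).pos
  set v : Fin n → ℤ := fun t => (q t * (D : ℚ)).num with hv
  have hvc : ∀ t, ((v t : ℤ) : ℚ) = q t * (D : ℚ) := by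
    intro t
    obtain ⟨c, hc⟩ := Finset.dvd_prod_of_mem (fun t => (q t).den) (Finset.mem_univ t)
    have h1 : (q t * (D : ℚ)) = (((q t).num * (c : ℤ)) : ℚ) := by
      rw [hD, hc]
      push_cast
      rw [← mul_assoc, Rat.mul_den_eq_num]
    have h2 : v t = (q t).num * (c : ℤ) := by
      rw [show v t = (q t * (D : ℚ)).num from rfl, h1]
      exact_mod_cast Rat.num_intCast _
    rw [h2]
    push_cast at h1 ⊢
    exact h1.symm
  have hvpos : ∀ t, 0 < v t := by
    intro t
    have h0 : (0 : ℚ) < ((v t : ℤ) : ℚ) := by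
      rw [hvc t]
      exact mul_pos (hqpos' t) (by exact_mod_cast hDpos)
    exact_mod_cast h0
  -- v is in the kernel
  have hqker : ∀ j, ∑ t, (Aq j t) * q t = 0 := by
    intro j
    have h0 := congrFun (LinearMap.mem_ker.mp hqK) j
    simpa [Matrix.mulVecLin_apply, Matrix.mulVec, dotProduct] using h0
  have hvker : ∀ j, ∑ t, ((A j t : ℚ)) * ((v t : ℚ)) = 0 := by
    intro j
    have h0 : ∑ t, Aq j t * (q t * (D : ℚ)) = 0 := by
      calc ∑ t, Aq j t * (q t * (D : ℚ)) = (∑ t, Aq j t * q t) * (D : ℚ) := by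
            rw [Finset.sum_mul]
            exact Finset.sum_congr rfl fun t _ => by ring
        _ = 0 := by rw [hqker j, zero_mul]
    calc ∑ t, ((A j t : ℚ)) * ((v t : ℚ)) = ∑ t, Aq j t * (q t * (D : ℚ)) := by
          refine Finset.sum_congr rfl fun t _ => ?_
          rw [hvc t, hAq]
          rfl
      _ = 0 := h0
  refine ⟨v, ?_, hvpos⟩
  funext j
  have hcast : ((ρ v j : ℤ) : ℝ) = 0 := by
    have h1 : ((ρ v j : ℤ) : ℝ) = ρℝ (fun t => (v t : ℝ)) j := by rw [hext v]
    rw [h1, hρℝ]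
    have h3 : ∑ t, ((A j t : ℝ)) * ((v t : ℝ)) = 0 := by exact_mod_cast hvker j
    rw [← h3]
    exact Finset.sum_congr rfl fun t _ => by ring
  have : ρ v j = 0 := by exact_mod_cast hcast
  simpa using this
end

section
/- Let Γ be a finite connected graph, possibly with multiple edges and loops, given by a finite vertex set V, a finite set Ē of oriented edges equipped with a fixed-point-free involution ē ↦ ě (orientation reversal), and a source map v₁ : Ē → V (the target of ē being v₂(ē) = v₁(ě)). Let V = V₀ ⊔ V₁ be a partition and let s : Ē → ℤ satisfy s(ě) = −s(ē) for all ē ∈ Ē. Assume s(ē) = 0 whenever both endpoints of ē lie in V₀, and s(ē) > 0 whenever v₁(ē) ∈ V₀ and v₂(ē) ∈ V₁. Then the following are equivalent: (1) there exists a function s : V → ℝ with s_v = 0 for every v ∈ V₀, s_v > 0 for every v ∈ V₁, and such that for every oriented edge ē ∈ Ē there exists λ_ē > 0 with s_{v₂(ē)} − s_{v₁(ē)} = λ_ē · s(ē); (2) the relations 'v ≈ v′ if v and v′ are joined by an edge with label 0' and 'v ≺ v′ if some oriented edge from v to v′ has positive label' are well defined (i.e. for every pair of vertices, all oriented edges from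 one to the other have labels of the same sign) and generate a partial order on V — formally: Γ contains no closed walk traversing oriented edges ē₁,…,ē_k with s(ēᵢ) ≥ 0 for every i and s(ēᵢ) > 0 for at least one i. -/
/-!
A sign-compatible vertex function increases weakly along every edge of nonnegative label and
strictly along every edge of positive label, so telescoping around a closed walk rules out
positive closed walks. Conversely, if there is none, the vertices reachable from a positive edge
never reach back to its source, so the number of vertices strictly below `v` in the reachability
preorder of nonnegative edges increases strictly along positive edges and is constant along zero
edges. Adding `1` and restricting to `V₁` gives the required function: an edge from `V₀` to
`V₁` is positive, and a nonnegative edge never leaves `V₁`.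
-/

open Relation

theorem Relation.TransGen.exists_fin_path {α : Type*} {r : α → α → Prop} {a b : α}
    (h : TransGen r a b) : ∃ (k : ℕ) (x : Fin (k + 1) → α), x 0 = a ∧
      (∀ i : Fin k, r (x i.castSucc) (x i.succ)) ∧ r (x (Fin.last k)) b := by
  induction h with
  | single hab => exact ⟨0, fun _ => a, rfl, Fin.elim0, hab⟩
  | @tail b c _ hbc ih =>
    obtain ⟨k, x, hx0, hstep, hlast⟩ := ih
    refine ⟨k + 1, Fin.snoc x b, by simpa [Fin.snoc] using hx0, fun i => ?_, by simpa using hbc⟩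
    induction i using Fin.lastCases with
    | last => simpa using hlast
    | cast j =>
      rw [← Fin.castSucc_succ, Fin.snoc_castSucc, Fin.snoc_castSucc]
      exact hstep j

theorem Relation.TransGen.exists_fin_cycle {α : Type*} {r : α → α → Prop} {a : α}
    (h : TransGen r a a) :
    ∃ (k : ℕ) (x : Fin (k + 1) → α), x 0 = a ∧ ∀ i, r (x i) (x (i + 1)) := by
  obtain ⟨k, x, hx0, hstep, hlast⟩ := h.exists_fin_path
  refine ⟨k, x, hx0, fun i => ?_⟩
  induction i using Fin.lastCases with
  | last => rwa [Fin.last_add_one, hx0]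
  | cast j => rw [Fin.coeSucc_eq_succ]; exact hstep j

theorem Fin.not_exists_lt_add_one_of_forall_le_add_one {M : Type*} [AddCommMonoid M]
    [PartialOrder M] [IsOrderedCancelAddMonoid M] {k : ℕ} (g : Fin (k + 1) → M)
    (hle : ∀ i, g i ≤ g (i + 1)) : ¬ ∃ i, g i < g (i + 1) := by
  rintro ⟨j, hj⟩
  have hrot : ∑ i, g (i + 1) = ∑ i, g i :=
    Fintype.sum_equiv (Equiv.addRight 1) _ _ fun _ => rfl
  exact (Finset.sum_lt_sum (fun i _ => hle i) ⟨j, Finset.mem_univ _, hj⟩).ne hrot.symm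

theorem exists_pos_mul_eq {K : Type*} [Field K] [LinearOrder K] [IsStrictOrderedRing K]
    {x y : K} (hpos : 0 < y → 0 < x) (hneg : y < 0 → x < 0)
    (hzero : y = 0 → x = 0) : ∃ lam : K, 0 < lam ∧ x = lam * y := by
  rcases lt_trichotomy y 0 with hy | hy | hy
  · exact ⟨x / y, div_pos_of_neg_of_neg (hneg hy) hy, (div_mul_cancel₀ x hy.ne).symm⟩
  · exact ⟨1, one_pos, by rw [hzero hy, hy, mul_zero]⟩
  · exact ⟨x / y, div_pos (hpos hy) hy, (div_mul_cancel₀ x hy.ne').symm⟩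

section StrictLowerCount

variable {α : Type*} [Finite α]

noncomputable def strictLowerCount (r : α → α → Prop) (a : α) : ℕ :=
  {b | r b a ∧ ¬ r a b}.ncard

variable {r : α → α → Prop} [IsTrans α r] {a b : α}

theorem strictLowerCount_le (hab : r a b) : strictLowerCount r a ≤ strictLowerCount r b :=
  Set.ncard_le_ncard fun _ ⟨hca, hac⟩ =>
    ⟨_root_.trans hca hab, fun hbc => hac (_root_.trans hab hbc)⟩

theorem strictLowerCount_lt (hab : r a b) (hba : ¬ r b a) :
    strictLowerCount r a < strictLowerCount r b := by
  refine Set.ncard_lt_ncard (Set.ssubset_iff_subset_ne.2 ⟨?_, fun h => ?_⟩)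
  · exact fun _ ⟨hca, hac⟩ => ⟨_root_.trans hca hab, fun hbc => hac (_root_.trans hab hbc)⟩
  · have : a ∈ {c | r c b ∧ ¬ r b c} := ⟨hab, hba⟩
    rw [← h] at this
    exact this.2 this.1

end StrictLowerCount

section SignedGraph

variable {V E : Type*} (rev : E → E) (src : E → V) (s : E → ℤ)

def SignCompatible (f : V → ℝ) : Prop :=
  ∀ e, ∃ lam : ℝ, 0 < lam ∧ f (src (rev e)) - f (src e) = lam * (s e : ℝ)

def HasPositiveClosedWalk : Prop :=
  ∃ (k : ℕ) (e : Fin (k + 1) → E),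
    (∀ i : Fin (k + 1), src (rev (e i)) = src (e (i + 1))) ∧
    (∀ i, 0 ≤ s (e i)) ∧ (∃ i, 0 < s (e i))

def NonnegStep (v w : V) : Prop := ∃ e, src e = v ∧ src (rev e) = w ∧ 0 ≤ s e

/-- Closed walks are tracked through their edges, so that a given positive edge can be made the
first edge of the closed walk. -/
def NonnegFollows (e e' : E) : Prop := 0 ≤ s e ∧ src (rev e) = src e'

variable {rev src s}

theorem SignCompatible.not_hasPositiveClosedWalk {f : V → ℝ} (hf : SignCompatible rev src s f) :
    ¬ HasPositiveClosedWalk rev src s := by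
  choose lam hlam hdiff using hf
  rintro ⟨k, e, hwalk, hnonneg, hpos⟩
  have hstep : ∀ i, f (src (e (i + 1))) - f (src (e i)) = lam (e i) * s (e i) := fun i => by
    rw [← hwalk i, hdiff]
  refine Fin.not_exists_lt_add_one_of_forall_le_add_one (fun i => f (src (e i)))
    (fun i => sub_nonneg.1 ?_) ?_
  · rw [hstep]
    exact mul_nonneg (hlam _).le (Int.cast_nonneg (hnonneg i))
  · obtain ⟨i, hi⟩ := hpos
    refine ⟨i, sub_pos.1 ?_⟩
    rw [hstep]
    exact mul_pos (hlam _) (Int.cast_pos.2 hi)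

theorem signCompatible_of_le_of_lt (hinv : ∀ e, rev (rev e) = e)
    (hanti : ∀ e, s (rev e) = -s e) {f : V → ℝ}
    (hle : ∀ e, 0 ≤ s e → f (src e) ≤ f (src (rev e)))
    (hlt : ∀ e, 0 < s e → f (src e) < f (src (rev e))) : SignCompatible rev src s f := by
  intro e
  have hrev := hanti e
  refine exists_pos_mul_eq (fun h => sub_pos.2 (hlt e (Int.cast_pos.1 h)))
    (fun h => sub_neg.2 ?_) (fun h => sub_eq_zero.2 ?_)
  · have : s e < 0 := Int.cast_lt_zero.1 h
    simpa [hinv] using hlt (rev e) (by omega)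
  · have : s e = 0 := Int.cast_eq_zero.1 h
    exact le_antisymm (by simpa [hinv] using hle (rev e) (by omega)) (hle e this.ge)

theorem transGen_nonnegFollows_of_reflTransGen {e e' : E} (he : 0 ≤ s e)
    (h : ReflTransGen (NonnegStep rev src s) (src (rev e)) (src e')) :
    TransGen (NonnegFollows rev src s) e e' := by
  generalize hv : src (rev e) = v at h
  induction h using ReflTransGen.head_induction_on generalizing e with
  | refl => exact .single ⟨he, hv⟩
  | head hstep _ ih =>
    obtain ⟨e₁, hsrc, hdst, he₁⟩ := hstep
    exact .head ⟨he, hv.trans hsrc.symm⟩ (ih he₁ hdst)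

theorem src_rev_mem_of_nonneg (hinv : ∀ e, rev (rev e) = e) (hanti : ∀ e, s (rev e) = -s e)
    {V₁ : Set V} (h01 : ∀ e, src e ∉ V₁ → src (rev e) ∈ V₁ → 0 < s e) {e : E}
    (he : 0 ≤ s e) (hsrc : src e ∈ V₁) : src (rev e) ∈ V₁ := by
  by_contra hdst
  have := h01 (rev e) hdst (by rwa [hinv])
  rw [hanti] at this
  omega

theorem not_reflTransGen_nonnegStep_of_pos (hno : ¬ HasPositiveClosedWalk rev src s) {e : E}
    (he : 0 < s e) : ¬ ReflTransGen (NonnegStep rev src s) (src (rev e)) (src e) := by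
  intro h
  obtain ⟨k, x, hx0, hx⟩ := (transGen_nonnegFollows_of_reflTransGen he.le h).exists_fin_cycle
  exact hno ⟨k, x, fun i => (hx i).2, fun i => (hx i).1, 0, hx0 ▸ he⟩

theorem src_rev_mem_of_pos (hinv : ∀ e, rev (rev e) = e) (hanti : ∀ e, s (rev e) = -s e)
    {V₁ : Set V} (h00 : ∀ e, src e ∉ V₁ → src (rev e) ∉ V₁ → s e = 0)
    (h01 : ∀ e, src e ∉ V₁ → src (rev e) ∈ V₁ → 0 < s e) {e : E} (he : 0 < s e) :
    src (rev e) ∈ V₁ := by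
  by_contra hdst
  by_cases hsrc : src e ∈ V₁
  · exact hdst (src_rev_mem_of_nonneg hinv hanti h01 he.le hsrc)
  · exact he.ne' (h00 e hsrc hdst)

variable (rev src s) in
noncomputable def reachPotential [Finite V] (V₁ : Set V) : V → ℝ :=
  V₁.indicator fun v => (strictLowerCount (ReflTransGen (NonnegStep rev src s)) v : ℝ) + 1

section ReachPotential

variable [Finite V] {V₁ : Set V} {v : V}

theorem reachPotential_of_notMem (hv : v ∉ V₁) : reachPotential rev src s V₁ v = 0 :=
  Set.indicator_of_notMem hv _

theorem reachPotential_of_mem (hv : v ∈ V₁) :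
    reachPotential rev src s V₁ v =
      strictLowerCount (ReflTransGen (NonnegStep rev src s)) v + 1 :=
  Set.indicator_of_mem hv _

theorem reachPotential_pos (hv : v ∈ V₁) : 0 < reachPotential rev src s V₁ v := by
  rw [reachPotential_of_mem hv]
  positivity

theorem reachPotential_nonneg : 0 ≤ reachPotential rev src s V₁ v :=
  Set.indicator_nonneg (fun _ _ => by positivity) _

theorem reachPotential_le (hinv : ∀ e, rev (rev e) = e) (hanti : ∀ e, s (rev e) = -s e)
    (h01 : ∀ e, src e ∉ V₁ → src (rev e) ∈ V₁ → 0 < s e) {e : E} (he : 0 ≤ s e) :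
    reachPotential rev src s V₁ (src e) ≤ reachPotential rev src s V₁ (src (rev e)) := by
  by_cases hsrc : src e ∈ V₁
  · rw [reachPotential_of_mem hsrc,
      reachPotential_of_mem (src_rev_mem_of_nonneg hinv hanti h01 he hsrc)]
    exact add_le_add_left (Nat.cast_le.2 (strictLowerCount_le (.single ⟨e, rfl, rfl, he⟩))) _
  · exact reachPotential_of_notMem hsrc ▸ reachPotential_nonneg

theorem reachPotential_lt (hinv : ∀ e, rev (rev e) = e) (hanti : ∀ e, s (rev e) = -s e)
    (h00 : ∀ e, src e ∉ V₁ → src (rev e) ∉ V₁ → s e = 0)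
    (h01 : ∀ e, src e ∉ V₁ → src (rev e) ∈ V₁ → 0 < s e)
    (hno : ¬ HasPositiveClosedWalk rev src s) {e : E} (he : 0 < s e) :
    reachPotential rev src s V₁ (src e) < reachPotential rev src s V₁ (src (rev e)) := by
  have hdst := src_rev_mem_of_pos hinv hanti h00 h01 he
  by_cases hsrc : src e ∈ V₁
  · rw [reachPotential_of_mem hsrc, reachPotential_of_mem hdst]
    exact add_lt_add_left (Nat.cast_lt.2 (strictLowerCount_lt (.single ⟨e, rfl, rfl, he.le⟩)
      (not_reflTransGen_nonnegStep_of_pos hno he))) _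
  · rw [reachPotential_of_notMem hsrc]
    exact reachPotential_pos hdst

end ReachPotential

end SignedGraph

theorem tropical_function_iff_partial_order_general {V E : Type*} [Fintype V]
    (rev : E → E) (hinv : ∀ e, rev (rev e) = e)
    (src : E → V)
    (V₁ : Set V) (s : E → ℤ)
    (hanti : ∀ e, s (rev e) = -s e)
    (h00 : ∀ e, src e ∉ V₁ → src (rev e) ∉ V₁ → s e = 0)
    (h01 : ∀ e, src e ∉ V₁ → src (rev e) ∈ V₁ → 0 < s e) :
    (∃ f : V → ℝ,
      (∀ v, v ∉ V₁ → f v = 0) ∧ (∀ v ∈ V₁, 0 < f v) ∧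
      (∀ e : E, ∃ lam : ℝ, 0 < lam ∧
        f (src (rev e)) - f (src e) = lam * (s e : ℝ))) ↔
    ¬ ∃ (k : ℕ) (e : Fin (k + 1) → E),
      (∀ i : Fin (k + 1), src (rev (e i)) = src (e (i + 1))) ∧
      (∀ i, 0 ≤ s (e i)) ∧ (∃ i, 0 < s (e i)) := by
  constructor
  · rintro ⟨f, -, -, hf⟩
    exact SignCompatible.not_hasPositiveClosedWalk hf
  · intro hno
    exact ⟨reachPotential rev src s V₁, fun _ => reachPotential_of_notMem,
      fun _ => reachPotential_pos,
      signCompatible_of_le_of_lt hinv hanti (fun _ => reachPotential_le hinv hanti h01)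
        (fun _ => reachPotential_lt hinv hanti h00 h01 hno)⟩

/-- Lemma 3.19: for a finite connected graph (with multiple edges and loops allowed) whose
vertices are partitioned into `V₀ = V₁ᶜ` and `V₁`, with an antisymmetric integer label on
oriented edges vanishing on `V₀V₀`-edges and positive on oriented edges from `V₀` to `V₁`,
the existence of a tropical vertex function is equivalent to the absence of a closed walk
all of whose edge labels are nonnegative with at least one positive. -/
theorem tropical_function_iff_partial_order {V E : Type*} [Fintype V] [Fintype E]
    (rev : E → E) (hinv : ∀ e, rev (rev e) = e) (hfpf : ∀ e, rev e ≠ e)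
    (src : E → V)
    (hconn : ∀ v w : V, ∃ (k : ℕ) (p : Fin (k + 1) → V) (e : Fin k → E),
      p 0 = v ∧ p (Fin.last k) = w ∧
      ∀ i : Fin k, src (e i) = p i.castSucc ∧ src (rev (e i)) = p i.succ)
    (V₁ : Set V) (s : E → ℤ)
    (hanti : ∀ e, s (rev e) = -s e)
    (h00 : ∀ e, src e ∉ V₁ → src (rev e) ∉ V₁ → s e = 0)
    (h01 : ∀ e, src e ∉ V₁ → src (rev e) ∈ V₁ → 0 < s e) :
    (∃ f : V → ℝ,
      (∀ v, v ∉ V₁ → f v = 0) ∧ (∀ v ∈ V₁, 0 < f v) ∧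
      (∀ e : E, ∃ lam : ℝ, 0 < lam ∧
        f (src (rev e)) - f (src e) = lam * (s e : ℝ))) ↔
    ¬ ∃ (k : ℕ) (e : Fin (k + 1) → E),
      (∀ i : Fin (k + 1), src (rev (e i)) = src (e (i + 1))) ∧
      (∀ i, 0 ≤ s (e i)) ∧ (∃ i, 0 < s (e i)) :=
  tropical_function_iff_partial_order_general rev hinv src V₁ s hanti h00 h01
end

section
/- Index the coordinates of ℝ⁷ by (e₁, e₂, e₃, e₄, v₁, v₂, v₃) and those of ℝ⁴ by (e₁, e₂, e₃, e₄), and let ρ_ℝ : ℝ⁷ → ℝ⁴ be the linear map with ρ(1_{e_i}) = 1_{e_i} for i = 1, …, 4, ρ(1_{v₁}) = −1_{e₁} + 1_{e₃}, ρ(1_{v₂}) = −1_{e₂} + 1_{e₄}, and ρ(1_{v₃}) = −1_{e₃} − 1_{e₄}. Set α₁ = 1_{v₃} + 1_{e₃} + 1_{e₄}, α₂ = 1_{v₁} + 1_{v₃} + 1_{e₁} + 1_{e₄}, α₃ = 1_{v₂} + 1_{v₃} + 1_{e₂} + 1_{e₃}, α₄ = 1_{v₁} + 1_{v₂} + 1_{v₃}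 + 1_{e₁} + 1_{e₂}. Then: (i) the cone σ = ker(ρ_ℝ) ∩ [0,∞)⁷ is exactly the set of all linear combinations c₁α₁ + c₂α₂ + c₃α₃ + c₄α₄ with c₁, c₂, c₃, c₄ ≥ 0; and (ii) the group of integer relations {(a₁, a₂, a₃, a₄) ∈ ℤ⁴ : a₁α₁ + a₂α₂ + a₃α₃ + a₄α₄ = 0} is generated by (1, −1, −1, 1), i.e. the only relation among the αᵢ is α₁ + α₄ = α₂ + α₃. -/
theorem myCons_val_five {α : Type*} {n : ℕ} (a b c d e f : α) (v : Fin n → α) :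
    Matrix.vecCons a (Matrix.vecCons b (Matrix.vecCons c (Matrix.vecCons d
      (Matrix.vecCons e (Matrix.vecCons f v))))) 5 = f := rfl

theorem myCons_val_six {α : Type*} {n : ℕ} (a b c d e f g : α) (v : Fin n → α) :
    Matrix.vecCons a (Matrix.vecCons b (Matrix.vecCons c (Matrix.vecCons d
      (Matrix.vecCons e (Matrix.vecCons f (Matrix.vecCons g v)))))) 6 = g := rfl

set_option maxHeartbeats 1000000 in
/-- Example 3.22: for the explicit map `ρ_ℝ : ℝ⁷ → ℝ⁴`, the cone
`σ = ker ρ_ℝ ∩ [0,∞)⁷` is generated by `α₁, α₂, α₃, α₄`, and the group of integer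
relations among the `αᵢ` is generated by `α₁ + α₄ = α₂ + α₃`. -/
theorem example_3_22 (ρ : (Fin 7 → ℝ) →ₗ[ℝ] (Fin 4 → ℝ))
    (he1 : ρ ![1, 0, 0, 0, 0, 0, 0] = ![1, 0, 0, 0])
    (he2 : ρ ![0, 1, 0, 0, 0, 0, 0] = ![0, 1, 0, 0])
    (he3 : ρ ![0, 0, 1, 0, 0, 0, 0] = ![0, 0, 1, 0])
    (he4 : ρ ![0, 0, 0, 1, 0, 0, 0] = ![0, 0, 0, 1])
    (hv1 : ρ ![0, 0, 0, 0, 1, 0, 0] = ![-1, 0, 1, 0])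
    (hv2 : ρ ![0, 0, 0, 0, 0, 1, 0] = ![0, -1, 0, 1])
    (hv3 : ρ ![0, 0, 0, 0, 0, 0, 1] = ![0, 0, -1, -1]) :
    let α₁ : Fin 7 → ℝ := ![0, 0, 1, 1, 0, 0, 1]
    let α₂ : Fin 7 → ℝ := ![1, 0, 0, 1, 1, 0, 1]
    let α₃ : Fin 7 → ℝ := ![0, 1, 1, 0, 0, 1, 1]
    let α₄ : Fin 7 → ℝ := ![1, 1, 0, 0, 1, 1, 1]
    ({x : Fin 7 → ℝ | ρ x = 0 ∧ ∀ i, 0 ≤ x i} =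
      {x : Fin 7 → ℝ | ∃ c : Fin 4 → ℝ, (∀ k, 0 ≤ c k) ∧
        x = c 0 • α₁ + c 1 • α₂ + c 2 • α₃ + c 3 • α₄}) ∧
    (∀ a : Fin 4 → ℤ,
      ((a 0 : ℝ) • α₁ + (a 1 : ℝ) • α₂ + (a 2 : ℝ) • α₃ + (a 3 : ℝ) • α₄ = 0 ↔
        ∃ k : ℤ, a = k • ![1, -1, -1, 1])) := by
  intro α₁ α₂ α₃ α₄
  have key : ∀ x : Fin 7 → ℝ,
      ρ x = ![x 0 - x 4, x 1 - x 5, x 2 + x 4 - x 6, x 3 + x 5 - x 6] := by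
    intro x
    have hx : x = x 0 • (![1,0,0,0,0,0,0] : Fin 7 → ℝ) + x 1 • ![0,1,0,0,0,0,0]
        + x 2 • ![0,0,1,0,0,0,0] + x 3 • ![0,0,0,1,0,0,0] + x 4 • ![0,0,0,0,1,0,0]
        + x 5 • ![0,0,0,0,0,1,0] + x 6 • ![0,0,0,0,0,0,1] := by
      funext i
      fin_cases i <;>
        simp [α₁, α₂, α₃, α₄, myCons_val_five, myCons_val_six, Matrix.cons_val_two, Matrix.cons_val_three, Matrix.cons_val_four] <;> ring
    calc ρ x = ρ (x 0 • (![1,0,0,0,0,0,0] : Fin 7 → ℝ) + x 1 • ![0,1,0,0,0,0,0]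
        + x 2 • ![0,0,1,0,0,0,0] + x 3 • ![0,0,0,1,0,0,0] + x 4 • ![0,0,0,0,1,0,0]
        + x 5 • ![0,0,0,0,0,1,0] + x 6 • ![0,0,0,0,0,0,1]) := by rw [← hx]
      _ = _ := by
        simp only [map_add, map_smul, he1, he2, he3, he4, hv1, hv2, hv3]
        funext i
        fin_cases i <;>
          simp [α₁, α₂, α₃, α₄, myCons_val_five, myCons_val_six, Matrix.cons_val_two, Matrix.cons_val_three, Matrix.cons_val_four] <;> ring
  constructor
  · ext x
    simp only [Set.mem_setOf_eq]
    constructor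
    · rintro ⟨h0, hpos⟩
      rw [key] at h0
      have e0 : x 0 - x 4 = 0 := by simpa using congrFun h0 0
      have e1 : x 1 - x 5 = 0 := by simpa using congrFun h0 1
      have e2 : x 2 + x 4 - x 6 = 0 := by
        have := congrFun h0 2
        simpa only [Matrix.cons_val_two, Matrix.tail_cons, Matrix.head_cons,
          Pi.zero_apply] using this
      have e3 : x 3 + x 5 - x 6 = 0 := by
        have := congrFun h0 3
        simpa only [Matrix.cons_val_three, Matrix.tail_cons, Matrix.head_cons,
          Pi.zero_apply] using this
      refine ⟨![min (x 2) (x 3), x 0 - min (x 0) (x 1), x 1 - min (x 0) (x 1),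
        min (x 0) (x 1)], ?_, ?_⟩
      · intro k
        fin_cases k <;>
          simp [α₁, α₂, α₃, α₄, myCons_val_five, myCons_val_six, Matrix.cons_val_two, Matrix.cons_val_three, Matrix.cons_val_four] <;>
          constructor <;>
          first
            | exact hpos 0 | exact hpos 1 | exact hpos 2 | exact hpos 3
            | exact min_le_left _ _ | exact min_le_right _ _
      · funext i
        fin_cases i <;>
          simp [α₁, α₂, α₃, α₄, myCons_val_five, myCons_val_six, Matrix.cons_val_two, Matrix.cons_val_three, Matrix.cons_val_four] <;>
          rcases min_cases (x 0) (x 1) with ⟨hm1, hm1'⟩ | ⟨hm1, hm1'⟩ <;>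
          rcases min_cases (x 2) (x 3) with ⟨hm2, hm2'⟩ | ⟨hm2, hm2'⟩ <;>
          linarith
    · rintro ⟨c, hc, rfl⟩
      constructor
      · rw [key]
        funext i
        fin_cases i <;>
          simp [α₁, α₂, α₃, α₄, myCons_val_five, myCons_val_six, Matrix.cons_val_two, Matrix.cons_val_three, Matrix.cons_val_four] <;> ring
      · intro i
        fin_cases i <;>
          simp [α₁, α₂, α₃, α₄, myCons_val_five, myCons_val_six, Matrix.cons_val_two, Matrix.cons_val_three, Matrix.cons_val_four] <;>
          nlinarith [hc 0, hc 1, hc 2, hc 3]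
  · intro a
    constructor
    · intro h
      have e0 : (a 1 : ℝ) + (a 3 : ℝ) = 0 := by
        have := congrFun h 0
        simp [α₁, α₂, α₃, α₄, myCons_val_five, myCons_val_six, Matrix.cons_val_two, Matrix.cons_val_three, Matrix.cons_val_four] at this
        linarith
      have e1 : (a 2 : ℝ) + (a 3 : ℝ) = 0 := by
        have := congrFun h 1
        simp [α₁, α₂, α₃, α₄, myCons_val_five, myCons_val_six, Matrix.cons_val_two, Matrix.cons_val_three, Matrix.cons_val_four] at this
        linarith
      have e2 : (a 0 : ℝ) + (a 2 : ℝ) = 0 := by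
        have := congrFun h 2
        simp [α₁, α₂, α₃, α₄, myCons_val_five, myCons_val_six, Matrix.cons_val_two, Matrix.cons_val_three, Matrix.cons_val_four] at this
        linarith
      have e3 : (a 0 : ℝ) + (a 1 : ℝ) = 0 := by
        have := congrFun h 3
        simp [α₁, α₂, α₃, α₄, myCons_val_five, myCons_val_six, Matrix.cons_val_two, Matrix.cons_val_three, Matrix.cons_val_four] at this
        linarith
      have i1 : a 1 = -a 0 := by exact_mod_cast (by linarith : (a 1 : ℝ) = -(a 0 : ℝ))
      have i2 : a 2 = -a 0 := by exact_mod_cast (by linarith : (a 2 : ℝ) = -(a 0 : ℝ))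
      have i3 : a 3 = a 0 := by exact_mod_cast (by linarith : (a 3 : ℝ) = (a 0 : ℝ))
      refine ⟨a 0, ?_⟩
      funext k
      fin_cases k <;>
        simp [α₁, α₂, α₃, α₄, myCons_val_five, myCons_val_six, Matrix.cons_val_two, Matrix.cons_val_three, Matrix.cons_val_four] <;>
        omega
    · rintro ⟨k, rfl⟩
      funext i
      fin_cases i <;>
        simp [α₁, α₂, α₃, α₄, myCons_val_five, myCons_val_six, Matrix.cons_val_two, Matrix.cons_val_three, Matrix.cons_val_four] <;>
        push_cast <;> ring
end
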